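/- Let Θ = {p e_0 + q_1 e_1 + ⋯ + q_n e_n : p ∈ Λ, q_i ∈ Λ} ⊆ 𝓡^{n+1} where Λ = F_q[T]. For 2 ≤ ℓ ≤ n+1 and any nonzero w ∈ ⋀^ℓ(Θ), writing w = Σ_I w_I e_I and, for each index set I containing 0, c_{I,w} = Σ_{i ∉ I∖{0}} ± w_{I∪{i}∖{0}} e_i ∈ Λ^n, one has max_{0 ∈ I} ‖P c_{I,w}‖ ≥ 1, where P = [I_n | aᵗ] is the n × (n+1) block matrix with a ∈ F^n. -/

import Mathlib

open scoped Classical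

/-- A concrete model of the exterior algebra `⋀(𝓡^N)`: coordinates indexed by subsets
`I ⊆ {0, …, N-1}`, so that `v = Σ_I v_I e_I`. -/
abbrev ExtCoord (𝓡 : Type*) (N : ℕ) := Finset (Fin N) → 𝓡

/-- The sign `(-1)^{#{(j,k) ∈ J×K : k < j}}` appearing in `e_J ∧ e_K = ± e_{J ∪ K}`. -/
def wedgeSign {N : ℕ} (J K : Finset (Fin N)) : ℤ :=
  (-1) ^ ((J ×ˢ K).filter fun p => p.2 < p.1).card

/-- The wedge product on the concrete exterior algebra model. -/
def wedge {𝓡 : Type*} [CommRing 𝓡] {N : ℕ} (v w : ExtCoord 𝓡 N) : ExtCoord 𝓡 N :=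
  fun I => ∑ J ∈ I.powerset, (wedgeSign J (I \ J) : 𝓡) * v J * w (I \ J)

/-- The element `T = X⁻¹` in `F_q((X)) = F_q((T⁻¹))`. -/
noncomputable def Tvar (Fq : Type) [Field Fq] : LaurentSeries Fq := (HahnSeries.single (-1 : ℤ) 1)

/-- The absolute value `|a| = q ^ (deg_T a)` on `F = F_q((T⁻¹))`. -/
noncomputable def absv (Fq : Type) [Field Fq] [Fintype Fq] (a : LaurentSeries Fq) : ℝ :=
  if a = 0 then 0 else (Fintype.card Fq : ℝ) ^ (-(a.order))

/-- The embedding of `Λ = F_q[T]` into `F = F_q((T⁻¹))`, sending `T ↦ X⁻¹`. -/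
noncomputable def ΛtoF (Fq : Type) [Field Fq] : Polynomial Fq →+* LaurentSeries Fq :=
  Polynomial.eval₂RingHom (algebraMap Fq (LaurentSeries Fq)) (Tvar Fq)

/-- The vector `c_{I,w} = Σ_{i ∉ I∖{0}} ± w_{I∪{i}∖{0}} e_i ∈ Λ^{n+1}` of Statement 12,
with the signs arising from the expansion of the unipotent action. -/
noncomputable def cIw (Fq : Type) [Field Fq] {n : ℕ} (w : ExtCoord (LaurentSeries Fq) (n + 1))
    (I : Finset (Fin (n + 1))) : Fin (n + 1) → LaurentSeries Fq :=
  fun i => (-1 : LaurentSeries Fq) ^ ((I.erase 0).filter (· < i)).card *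
    w (insert i (I.erase 0))

lemma ΛtoF_coeff_neg_nat (Fq : Type) [Field Fq] (q : Polynomial Fq) (m : ℕ) :
    (ΛtoF Fq q).coeff (-(m : ℤ)) = q.coeff m := by
  have key : ΛtoF Fq q = ∑ i ∈ q.support, HahnSeries.single (-(i : ℤ)) (q.coeff i) := by
    rw [ΛtoF, Polynomial.coe_eval₂RingHom, Polynomial.eval₂_eq_sum, Polynomial.sum]
    refine Finset.sum_congr rfl fun i _ => ?_
    rw [Tvar, HahnSeries.single_pow]
    rw [HahnSeries.algebraMap_apply' (Γ := ℤ) (R := Fq), PowerSeries.algebraMap_apply,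
      Algebra.algebraMap_self, RingHom.id_apply,
      HahnSeries.ofPowerSeries_C, HahnSeries.C_apply, HahnSeries.single_mul_single]
    simp
  rw [key, ← HahnSeries.coeff.addMonoidHom_apply, map_sum]
  simp only [HahnSeries.coeff.addMonoidHom_apply, HahnSeries.coeff_single, neg_inj,
    Int.natCast_inj]
  rw [Finset.sum_ite_eq q.support m (fun i => q.coeff i)]
  split_ifs with h
  · rfl
  · exact (Polynomial.notMem_support_iff.mp h).symm

lemma one_le_absv_ΛtoF (Fq : Type) [Field Fq] [Fintype Fq] {q : Polynomial Fq} (hq : q ≠ 0) :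
    1 ≤ absv Fq (ΛtoF Fq q) := by
  have hc : (ΛtoF Fq q).coeff (-(q.natDegree : ℤ)) ≠ 0 := by
    rw [ΛtoF_coeff_neg_nat]
    simpa [Polynomial.coeff_natDegree] using Polynomial.leadingCoeff_ne_zero.mpr hq
  have hne : ΛtoF Fq q ≠ 0 := fun h => hc (by simp [h])
  have horder : (ΛtoF Fq q).order ≤ 0 :=
    le_trans (HahnSeries.order_le_of_coeff_ne_zero hc) (by simp)
  rw [absv, if_neg hne]
  refine one_le_zpow₀ ?_ (by omega)
  exact_mod_cast Nat.one_le_iff_ne_zero.mpr Fintype.card_ne_zero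

/-- The unified construction: if `S` has `ℓ-1` elements, doesn't contain `0`,
`w (insert j₀ S) ≠ 0` for some `j₀ ≠ last n`, and `w (insert (last n) S) = 0`,
then `I = insert 0 S` works. -/
lemma aux_case (Fq : Type) [Field Fq] [Fintype Fq] {n ℓ : ℕ}
    (a : Fin n → LaurentSeries Fq) (w : ExtCoord (LaurentSeries Fq) (n + 1))
    (hΛ : ∀ I, w I ∈ Set.range (ΛtoF Fq))
    (S : Finset (Fin (n + 1))) (hS0 : (0 : Fin (n + 1)) ∉ S) (hcard : S.card + 1 = ℓ)
    (j₀ : Fin (n + 1)) (hj₀ : j₀ ≠ Fin.last n)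
    (hwj : w (insert j₀ S) ≠ 0)
    (hwn : w (insert (Fin.last n) S) = 0) :
    ∃ I : Finset (Fin (n + 1)), 0 ∈ I ∧ I.card = ℓ ∧
      ∃ j : Fin n, 1 ≤ absv Fq
        (cIw Fq w I j.castSucc + a j * cIw Fq w I (Fin.last n)) := by
  refine ⟨insert 0 S, Finset.mem_insert_self 0 S, by rw [Finset.card_insert_of_notMem hS0]; omega, ?_⟩
  have hjlt : (j₀ : ℕ) < n := Fin.val_lt_last hj₀
  refine ⟨⟨(j₀ : ℕ), hjlt⟩, ?_⟩
  have hcs : (Fin.castSucc ⟨(j₀ : ℕ), hjlt⟩ : Fin (n + 1)) = j₀ := by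
    ext; simp
  have herase : (insert (0 : Fin (n + 1)) S).erase 0 = S := Finset.erase_insert hS0
  rw [hcs]
  rw [cIw, cIw, herase, hwn, mul_zero, mul_zero, add_zero]
  obtain ⟨q, hq⟩ := hΛ (insert j₀ S)
  have hqne : q ≠ 0 := by rintro rfl; simp [map_zero] at hq; exact hwj hq.symm
  rw [← hq, show ((-1 : LaurentSeries Fq) ^ (S.filter (· < j₀)).card * ΛtoF Fq q)
      = ΛtoF Fq ((-1) ^ (S.filter (· < j₀)).card * q) by rw [map_mul, map_pow, map_neg, map_one]]
  exact one_le_absv_ΛtoF Fq (mul_ne_zero (pow_ne_zero _ (neg_ne_zero.mpr one_ne_zero)) hqne)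

lemma pick_j0 {n : ℕ} (hn : 1 ≤ n) (K : Finset (Fin (n + 1))) (h2 : 2 ≤ K.card) :
    ∃ j₀ ∈ K, j₀ ≠ Fin.last n ∧ ((0 : Fin (n + 1)) ∈ K → j₀ = 0) := by
  have h0n : (0 : Fin (n + 1)) ≠ Fin.last n := by
    intro h
    have := congrArg Fin.val h
    simp [Fin.last] at this
    omega
  by_cases h0 : (0 : Fin (n + 1)) ∈ K
  · exact ⟨0, h0, h0n, fun _ => rfl⟩
  · have : (K.erase (Fin.last n)).Nonempty := by
      rw [← Finset.card_pos]
      have := Finset.card_erase_of_mem (s := K) (a := Fin.last n)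
      by_cases hm : Fin.last n ∈ K
      · rw [Finset.card_erase_of_mem hm]; omega
      · rw [Finset.erase_eq_of_notMem hm]; omega
    obtain ⟨j₀, hj₀⟩ := this
    exact ⟨j₀, Finset.mem_of_mem_erase hj₀, (Finset.mem_erase.mp hj₀).1,
      fun h => absurd h h0⟩


/-- function field analogue of Kleinbock's Lemma 4.6: for a nonzero
`w ∈ ⋀^ℓ(Θ)`, `2 ≤ ℓ ≤ n+1`, one has `max_{0 ∈ I} ‖P c_{I,w}‖ ≥ 1`, where
`P = [I_n | aᵗ]`, i.e. `(P c)_j = c_j + α_j c_n`. -/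
theorem max_Pc_ge_one (Fq : Type) [Field Fq] [Fintype Fq] (n ℓ : ℕ) (hn : 1 ≤ n)
    (hℓ₁ : 2 ≤ ℓ) (hℓ₂ : ℓ ≤ n + 1)
    (a : Fin n → LaurentSeries Fq)
    (w : ExtCoord (LaurentSeries Fq) (n + 1)) (hw : w ≠ 0)
    (hdeg : ∀ I, w I ≠ 0 → I.card = ℓ)
    (hΛ : ∀ I, w I ∈ Set.range (ΛtoF Fq)) :
    ∃ I : Finset (Fin (n + 1)), 0 ∈ I ∧ I.card = ℓ ∧
      ∃ j : Fin n, 1 ≤ absv Fq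
        (cIw Fq w I j.castSucc + a j * cIw Fq w I (Fin.last n)) := by
  -- Step 1: if some nonzero coefficient set contains `last n`, done.
  have step1 : ∀ K : Finset (Fin (n + 1)), w K ≠ 0 → Fin.last n ∈ K →
      ∃ I : Finset (Fin (n + 1)), 0 ∈ I ∧ I.card = ℓ ∧
        ∃ j : Fin n, 1 ≤ absv Fq
          (cIw Fq w I j.castSucc + a j * cIw Fq w I (Fin.last n)) := by
    intro K hK hKn
    have hKcard : K.card = ℓ := hdeg K hK
    obtain ⟨j₀, hj₀K, hj₀last, hj₀0⟩ := pick_j0 hn K (by omega)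
    set S := K.erase j₀ with hS
    have hS0 : (0 : Fin (n + 1)) ∉ S := by
      by_cases h0 : (0 : Fin (n + 1)) ∈ K
      · rw [hS, hj₀0 h0]; exact Finset.notMem_erase 0 K
      · exact fun h => h0 (Finset.mem_of_mem_erase h)
    have hScard : S.card + 1 = ℓ := by
      rw [hS, Finset.card_erase_of_mem hj₀K]; omega
    have hnS : Fin.last n ∈ S := Finset.mem_erase.mpr ⟨(Ne.symm hj₀last), hKn⟩
    refine aux_case Fq a w hΛ S hS0 hScard j₀ hj₀last ?_ ?_
    · rwa [hS, Finset.insert_erase hj₀K]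
    · rw [Finset.insert_eq_self.mpr hnS]
      by_contra hSne
      have := hdeg S hSne
      omega
  -- get a nonzero coefficient
  obtain ⟨J, hJ⟩ : ∃ J, w J ≠ 0 := by
    by_contra h
    push_neg at h
    exact hw (funext fun I => h I)
  have hJcard : J.card = ℓ := hdeg J hJ
  by_cases hJn : Fin.last n ∈ J
  · exact step1 J hJ hJn
  · obtain ⟨j₀, hj₀J, hj₀last, hj₀0⟩ := pick_j0 hn J (by omega)
    set S := J.erase j₀ with hS
    have hS0 : (0 : Fin (n + 1)) ∉ S := by
      by_cases h0 : (0 : Fin (n + 1)) ∈ J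
      · rw [hS, hj₀0 h0]; exact Finset.notMem_erase 0 J
      · exact fun h => h0 (Finset.mem_of_mem_erase h)
    have hScard : S.card + 1 = ℓ := by
      rw [hS, Finset.card_erase_of_mem hj₀J]; omega
    by_cases hwn : w (insert (Fin.last n) S) = 0
    · refine aux_case Fq a w hΛ S hS0 hScard j₀ hj₀last ?_ hwn
      rwa [hS, Finset.insert_erase hj₀J]
    · exact step1 _ hwn (Finset.mem_insert_self _ _)
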